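/- arXiv:1301.1076 — 3 statements merged into one kernel-verified Lean document; each statement's English description precedes it below -/
import Mathlib

section
/- Let G be a group and let ρ, φ, ψ : G → ℤ/2ℤ be group homomorphisms (to the additive group of the field 𝔽₂). Let L = ker(ρ) ∩ ker(φ) and let X²(L) be the subgroup of G generated by the squares of all elements of L; X²(L) is a normal subgroup of G, and ρ, φ, ψ induce homomorphisms ρ̄, φ̄, ψ̄ on the quotient Q = G/X²(L). Then there exists a function F : G → ℤ/2ℤ with φ(g)φ(h) + ρ(g)φ(h) + ρ(g)ψ(h) = F(gh) + F(g) + F(h) for all g, h ∈ G if and only if there exists a function F̄ : Q → ℤ/2ℤ with φ̄(x)φ̄(y) + ρ̄(x)φ̄(y) + ρ̄(x)ψ̄(y) = F̄(xy) + F̄(x) + F̄(y) for all x, y ∈ Q. -/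
/-- `X²(L)`: the subgroup generated by the squares of all elements of `L`. -/
def sqSubgroup {G : Type*} [Group G] (L : Subgroup G) : Subgroup G :=
  Subgroup.closure ((fun k => k ^ 2) '' (L : Set G))

/-- If `L` is normal in `G` then `X²(L)`, being characteristic in `L`, is normal in `G`. -/
instance sqSubgroup_normal {G : Type*} [Group G] (L : Subgroup G) [hL : L.Normal] :
    (sqSubgroup L).Normal := by
  constructor
  intro n hn g
  have h1 : (MulAut.conj g).toMonoidHom n ∈
      (sqSubgroup L).map (MulAut.conj g).toMonoidHom :=
    Subgroup.mem_map_of_mem _ hn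
  rw [sqSubgroup, MonoidHom.map_closure] at h1
  have h2 : Subgroup.closure ((MulAut.conj g).toMonoidHom ''
      ((fun k => k ^ 2) '' (L : Set G))) ≤ sqSubgroup L := by
    apply (Subgroup.closure_le _).mpr
    rintro _ ⟨_, ⟨k, hk, rfl⟩, rfl⟩
    apply Subgroup.subset_closure
    exact ⟨(MulAut.conj g) k, hL.conj_mem k hk g, (map_pow (MulAut.conj g) k 2).symm⟩
  simpa using h2 h1

/-!
Write `c(g,h) = φ(g)φ(h) + ρ(g)φ(h) + ρ(g)ψ(h)` and suppose `c = δF` on `G`. Every homomorphism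
to `𝔽₂` kills squares, so `c(g, k²) = 0` and hence `F(gk²) = F(g) + F(k²)`; for `k ∈ ker ρ ∩ ker φ`
moreover `F(k²) = c(k,k) = 0`. So `F` is invariant under right multiplication by the generators
of `X²(L)`, hence by all of `X²(L)`, and descends to `Q`. Conversely, a coboundary on `Q` pulls
back to one on `G`.
-/

open Multiplicative

section Coboundary

variable {G : Type*} [Group G]

-- Over `𝔽₂` the signs of `δF (g, h) = F g - F (g * h) + F h` are immaterial.
def IsCoboundary (c : G → G → ZMod 2) : Prop :=
  ∃ F : G → ZMod 2, ∀ g h, c g h = F (g * h) + F g + F h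

theorem IsCoboundary.comp {H : Type*} [Group H] {c : H → H → ZMod 2} (hc : IsCoboundary c)
    (f : G →* H) : IsCoboundary fun g h => c (f g) (f h) := by
  obtain ⟨F, hF⟩ := hc
  exact ⟨F ∘ f, fun g h => by simpa only [Function.comp_apply, map_mul] using hF (f g) (f h)⟩

theorem isCoboundary_of_comp_mk {N : Subgroup G} [N.Normal] {c : G ⧸ N → G ⧸ N → ZMod 2}
    {F : G → ZMod 2} (hF : ∀ g h : G, c g h = F (g * h) + F g + F h)
    (hN : ∀ g, ∀ n ∈ N, F (g * n) = F g) : IsCoboundary c := by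
  refine ⟨Quotient.lift F fun a b hab => ?_, fun x y => ?_⟩
  · rw [← hN a _ (QuotientGroup.leftRel_apply.mp hab), mul_inv_cancel_left]
  · induction x using QuotientGroup.induction_on
    induction y using QuotientGroup.induction_on
    exact hF _ _

end Coboundary

theorem apply_mul_eq_of_mem_closure {G α : Type*} [Group G] {S : Set G} {F : G → α}
    (hS : ∀ g, ∀ s ∈ S, F (g * s) = F g) {n : G} (hn : n ∈ Subgroup.closure S) (g : G) :
    F (g * n) = F g := by
  induction hn using Subgroup.closure_induction generalizing g with
  | mem s hs => exact hS g s hs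
  | one => rw [mul_one]
  | mul x y _ _ ihx ihy => rw [← mul_assoc, ihy, ihx]
  | inv x _ ihx => rw [← ihx, inv_mul_cancel_right]

theorem map_sq_eq_one {G : Type*} [Group G] (χ : G →* Multiplicative (ZMod 2)) (k : G) :
    χ (k ^ 2) = 1 := by
  rw [map_pow]
  generalize χ k = x
  decide +revert

section QuadCocycle

variable {G : Type*} [Group G]

def quadCocycle (ρ φ ψ : G →* Multiplicative (ZMod 2)) (g h : G) : ZMod 2 :=
  toAdd (φ g) * toAdd (φ h) + toAdd (ρ g) * toAdd (φ h) + toAdd (ρ g) * toAdd (ψ h)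

variable {ρ φ ψ : G →* Multiplicative (ZMod 2)}

theorem quadCocycle_sq_right (g k : G) : quadCocycle ρ φ ψ g (k ^ 2) = 0 := by
  simp only [quadCocycle, map_sq_eq_one, toAdd_one, mul_zero, add_zero]

theorem quadCocycle_self_of_mem {k : G} (hk : k ∈ ρ.ker ⊓ φ.ker) :
    quadCocycle ρ φ ψ k k = 0 := by
  simp only [quadCocycle, MonoidHom.mem_ker.mp hk.1, MonoidHom.mem_ker.mp hk.2, toAdd_one, mul_zero,
    zero_mul, add_zero]

theorem apply_mul_sq_eq_of_quadCocycle_eq {F : G → ZMod 2}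
    (hF : ∀ g h, quadCocycle ρ φ ψ g h = F (g * h) + F g + F h) (g : G) {k : G}
    (hk : k ∈ ρ.ker ⊓ φ.ker) : F (g * k ^ 2) = F g := by
  have hsq : F (k ^ 2) = 0 := by
    have := hF k k
    rw [quadCocycle_self_of_mem hk, add_assoc, CharTwo.add_self_eq_zero, add_zero, ← sq] at this
    exact this.symm
  have := hF g (k ^ 2)
  rw [quadCocycle_sq_right, hsq, add_zero, eq_comm, CharTwo.add_eq_zero] at this
  exact this

end QuadCocycle

/-- for homomorphisms `ρ, φ, ψ : G → ℤ/2ℤ`, with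
`L = ker ρ ∩ ker φ` and `Q = G/X²(L)`, and `ρ̄, φ̄, ψ̄` the induced homomorphisms
on `Q`, the 2-cocycle `(g,h) ↦ φ(g)φ(h) + ρ(g)φ(h) + ρ(g)ψ(h)` is a coboundary
on `G` iff the corresponding 2-cocycle on `Q` is a coboundary. -/
theorem stmt3 (G : Type*) [Group G] (ρ φ ψ : G →* Multiplicative (ZMod 2))
    (ρbar φbar ψbar : G ⧸ sqSubgroup (ρ.ker ⊓ φ.ker) →* Multiplicative (ZMod 2))
    (hρbar : ∀ g : G, ρbar (QuotientGroup.mk g) = ρ g)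
    (hφbar : ∀ g : G, φbar (QuotientGroup.mk g) = φ g)
    (hψbar : ∀ g : G, ψbar (QuotientGroup.mk g) = ψ g) :
    (∃ F : G → ZMod 2, ∀ g h : G,
        Multiplicative.toAdd (φ g) * Multiplicative.toAdd (φ h) +
          Multiplicative.toAdd (ρ g) * Multiplicative.toAdd (φ h) +
          Multiplicative.toAdd (ρ g) * Multiplicative.toAdd (ψ h) =
        F (g * h) + F g + F h) ↔
    (∃ Fbar : G ⧸ sqSubgroup (ρ.ker ⊓ φ.ker) → ZMod 2,
      ∀ x y : G ⧸ sqSubgroup (ρ.ker ⊓ φ.ker),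
        Multiplicative.toAdd (φbar x) * Multiplicative.toAdd (φbar y) +
          Multiplicative.toAdd (ρbar x) * Multiplicative.toAdd (φbar y) +
          Multiplicative.toAdd (ρbar x) * Multiplicative.toAdd (ψbar y) =
        Fbar (x * y) + Fbar x + Fbar y) := by
  have hbar : ∀ g h : G, quadCocycle ρbar φbar ψbar g h = quadCocycle ρ φ ψ g h := fun g h => by
    simp only [quadCocycle, hρbar, hφbar, hψbar]
  change IsCoboundary (quadCocycle ρ φ ψ) ↔ IsCoboundary (quadCocycle ρbar φbar ψbar)
  constructor
  · rintro ⟨F, hF⟩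
    refine isCoboundary_of_comp_mk (fun g h => (hbar g h).trans (hF g h)) fun g n hn => ?_
    refine apply_mul_eq_of_mem_closure ?_ hn g
    rintro g' _ ⟨k, hk, rfl⟩
    exact apply_mul_sq_eq_of_quadCocycle_eq hF g' hk
  · intro h
    simpa only [QuotientGroup.mk'_apply, hbar] using h.comp (QuotientGroup.mk' _)
end

section
/- Let Θ ∈ GL(2,ℤ) be hyperbolic, i.e. det Θ = ±1 and no eigenvalue of Θ is a root of unity (equivalently: if det Θ = 1 then |tr Θ| > 2, and if det Θ = −1 then tr Θ ≠ 0). Let π_Θ = ℤ² ⋊_Θ ℤ, and let N be a nontrivial normal subgroup of π_Θ of infinite index. Then N is contained in the subgroup A = ℤ² × {0}, and N has finite index in A. In particular N is abelian. -/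
/-!
Let `g ∈ N` have `ℤ`-coordinate `b ≠ 0`. Commutators of `g` with `A = ℤ²` give
`(Θ^b - 1)ℤ² ⊆ N`, and `Θ^b - 1` is nonsingular: if `det Θ = 1` then `|tr Θ^n|` increases
strictly with `n`, so `tr Θ^n ≠ 2`; if `det Θ = -1` apply this to `Θ²`. Thus `N ∩ A` has finite
index in `A`, and the image of `N` in `ℤ` contains `b`, so `N` would have finite index in `π_Θ`.
Hence an infinite-index `N` lies in `A`. There a nonzero `v ∈ N` gives `v, Θv ∈ N`, which are
independent: a rational eigenvector of `Θ` would make `tr² - 4 det` a perfect square, and for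
hyperbolic `Θ` it lies strictly between two consecutive squares.
-/

/-- The additive automorphism of `ℤ²` given by a matrix `Θ ∈ GL(2,ℤ)`. -/
def thetaAddAut (Θ : GL (Fin 2) ℤ) : (Fin 2 → ℤ) ≃+ (Fin 2 → ℤ) where
  toFun v := (Θ : Matrix (Fin 2) (Fin 2) ℤ).mulVec v
  invFun v := (Θ⁻¹ : GL (Fin 2) ℤ).1.mulVec v
  left_inv v := by
    simp only [Matrix.mulVec_mulVec, Units.inv_mul, Matrix.one_mulVec]
  right_inv v := by
    simp only [Matrix.mulVec_mulVec, Units.mul_inv, Matrix.one_mulVec]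
  map_add' v w := by simpa using Matrix.mulVec_add (Θ : Matrix (Fin 2) (Fin 2) ℤ) v w

/-- `π_Θ = ℤ² ⋊_Θ ℤ`, the semidirect product in which the generator of `ℤ`
acts on `ℤ²` by the matrix `Θ`. -/
abbrev piTheta (Θ : GL (Fin 2) ℤ) : Type :=
  SemidirectProduct (Multiplicative (Fin 2 → ℤ)) (Multiplicative ℤ)
    (zpowersHom (MulAut (Multiplicative (Fin 2 → ℤ)))
      (AddEquiv.toMultiplicative (thetaAddAut Θ)))


/-- The subgroup `A = ℤ² × {0}` of `π_Θ`. -/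
def zSqSubgroup (Θ : GL (Fin 2) ℤ) : Subgroup (piTheta Θ) :=
  (SemidirectProduct.inl : Multiplicative (Fin 2 → ℤ) →* piTheta Θ).range

theorem Int.isSquare_of_mul_sq_eq_sq {D u y : ℤ} (hy : y ≠ 0) (h : D * y ^ 2 = u ^ 2) :
    IsSquare D := by
  obtain ⟨k, rfl⟩ : y ∣ u := (Int.pow_dvd_pow_iff two_ne_zero).mp ⟨D, by rw [← h, mul_comm]⟩
  exact ⟨k, mul_right_cancel₀ (pow_ne_zero 2 hy) (by rw [h]; ring)⟩

namespace Matrix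

variable {R : Type*} [CommRing R]

theorem mul_self_fin_two (M : Matrix (Fin 2) (Fin 2) R) : M * M = M.trace • M - M.det • 1 := by
  ext i j
  fin_cases i <;> fin_cases j <;>
    simp [mul_apply, trace_fin_two, det_fin_two] <;> ring

theorem trace_pow_add_two_fin_two (M : Matrix (Fin 2) (Fin 2) R) (n : ℕ) :
    (M ^ (n + 2)).trace = M.trace * (M ^ (n + 1)).trace - M.det * (M ^ n).trace := by
  rw [pow_add, pow_two, mul_self_fin_two, Matrix.mul_sub, mul_smul_comm, mul_smul_comm, mul_one,
    ← pow_succ, trace_sub, trace_smul, trace_smul, smul_eq_mul, smul_eq_mul]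

theorem det_sub_one_fin_two (M : Matrix (Fin 2) (Fin 2) R) :
    (M - 1).det = M.det - M.trace + 1 := by
  simp only [det_fin_two, trace_fin_two, sub_apply, one_apply_eq, one_apply_ne, ne_eq, zero_ne_one,
    one_ne_zero, not_false_eq_true, sub_zero, Fin.isValue]
  ring

theorem det_inv_sub_one_ne_zero {n : Type*} [Fintype n] [DecidableEq n] [IsDomain R]
    (U : GL n R) (h : ((U : Matrix n n R) - 1).det ≠ 0) :
    (((U⁻¹ : GL n R) : Matrix n n R) - 1).det ≠ 0 := by
  have hfac : ((U⁻¹ : GL n R) : Matrix n n R) - 1 =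
      ((-U⁻¹ : GL n R) : Matrix n n R) * ((U : Matrix n n R) - 1) := by
    rw [Units.val_neg, neg_mul, Matrix.mul_sub, Units.inv_mul, mul_one, neg_sub]
  rw [hfac, det_mul]
  exact mul_ne_zero (GeneralLinearGroup.det (-U⁻¹)).ne_zero h

section DetEqOne

variable {M : Matrix (Fin 2) (Fin 2) ℤ} (hdet : M.det = 1) (htr : 2 < |M.trace|)
include hdet htr

theorem abs_trace_pow_lt_abs_trace_pow_succ (n : ℕ) :
    |(M ^ n).trace| < |(M ^ (n + 1)).trace| := by
  induction n with
  | zero => simpa using htr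
  | succ n ih =>
    have hrec := trace_pow_add_two_fin_two M n
    rw [hdet, one_mul] at hrec
    have hrev := abs_sub_abs_le_abs_sub (M.trace * (M ^ (n + 1)).trace) (M ^ n).trace
    rw [← hrec, abs_mul] at hrev
    nlinarith [abs_nonneg (M ^ (n + 1)).trace]

theorem two_lt_abs_trace_pow {n : ℕ} (hn : n ≠ 0) : 2 < |(M ^ n).trace| := by
  obtain ⟨m, rfl⟩ := Nat.exists_eq_succ_of_ne_zero hn
  induction m with
  | zero => simpa using htr
  | succ m ih => exact (ih m.succ_ne_zero).trans (abs_trace_pow_lt_abs_trace_pow_succ hdet htr _)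

theorem det_pow_sub_one_ne_zero_of_det_eq_one {n : ℕ} (hn : n ≠ 0) : (M ^ n - 1).det ≠ 0 := by
  have htr_pow := two_lt_abs_trace_pow hdet htr hn
  rw [det_sub_one_fin_two, det_pow, hdet, one_pow]
  rcases lt_abs.mp htr_pow with h | h <;> omega

end DetEqOne

theorem isSquare_discr_of_det_mulVec_eq_zero {M : Matrix (Fin 2) (Fin 2) ℤ}
    {v : Fin 2 → ℤ} (hv : v ≠ 0) (h : (of ![v, M *ᵥ v]).det = 0) : IsSquare M.discr := by
  simp only [det_fin_two, mulVec_fin_two, of_apply, cons_val_zero, cons_val_one, Fin.isValue] at h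
  rw [discr_fin_two, trace_fin_two, det_fin_two]
  by_cases hx : v 0 = 0
  · have hy : v 1 ≠ 0 := fun hy ↦ hv (by ext i; fin_cases i <;> assumption)
    exact Int.isSquare_of_mul_sq_eq_sq (u := 2 * M 1 0 * v 0 + (M 1 1 - M 0 0) * v 1) hy
      (by linear_combination (-4 * M 1 0) * h)
  · exact Int.isSquare_of_mul_sq_eq_sq (u := (M 1 1 - M 0 0) * v 0 - 2 * M 0 1 * v 1) hx
      (by linear_combination (4 * M 0 1) * h)

end Matrix

open Matrix

/-- Hyperbolicity of `Θ ∈ GL(2,ℤ)` in the sense of the statement (no eigenvalue is a root of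
unity); not to be confused with `Matrix.IsHyperbolic` (positive discriminant). -/
def IsAnosov (M : Matrix (Fin 2) (Fin 2) ℤ) : Prop :=
  (M.det = 1 ∧ 2 < |M.trace|) ∨ (M.det = -1 ∧ M.trace ≠ 0)

namespace IsAnosov

variable {M : Matrix (Fin 2) (Fin 2) ℤ} (hM : IsAnosov M)
include hM

theorem det_pow_sub_one_ne_zero {n : ℕ} (hn : n ≠ 0) : (M ^ n - 1).det ≠ 0 := by
  rcases hM with ⟨hdet, htr⟩ | ⟨hdet, htr⟩
  · exact det_pow_sub_one_ne_zero_of_det_eq_one hdet htr hn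
  · -- `M²` has determinant `1` and trace `tr² + 2`, and `M^(2n) - 1 = (M^n + 1)(M^n - 1)`.
    have hdet_sq : (M ^ 2).det = 1 := by rw [det_pow, hdet]; norm_num
    have htr_sq : (M ^ 2).trace = M.trace ^ 2 + 2 := by
      simpa [hdet, sq] using trace_pow_add_two_fin_two M 0
    have htr_pos : 0 < M.trace ^ 2 := by positivity
    have htr_sq_gt : 2 < |(M ^ 2).trace| := by
      rw [htr_sq, abs_of_pos (by positivity)]
      omega
    intro h
    apply det_pow_sub_one_ne_zero_of_det_eq_one hdet_sq htr_sq_gt hn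
    rw [← pow_mul, mul_comm, pow_mul, sq, mul_self_sub_one, det_mul, h, mul_zero]

theorem not_isSquare_discr : ¬ IsSquare M.discr := by
  rintro ⟨k, hk⟩
  rw [discr_fin_two] at hk
  rcases hM with ⟨hdet, htr⟩ | ⟨hdet, htr⟩
  · have hlt : |k| < |M.trace| := sq_lt_sq.mp (by nlinarith)
    nlinarith [sq_abs k, sq_abs M.trace, abs_nonneg k]
  · have hlt : |M.trace| < |k| := sq_lt_sq.mp (by nlinarith)
    have htr_one : |M.trace| = 1 := by nlinarith [sq_abs k, sq_abs M.trace, abs_pos.mpr htr]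
    have hk_sq : |k| * |k| = 5 := by nlinarith [sq_abs k, sq_abs M.trace]
    have : |k| < 3 := by nlinarith
    have : 2 < |k| := by nlinarith
    omega

theorem det_of_mulVec_ne_zero {v : Fin 2 → ℤ} (hv : v ≠ 0) : (of ![v, M *ᵥ v]).det ≠ 0 :=
  fun h ↦ hM.not_isSquare_discr (isSquare_discr_of_det_mulVec_eq_zero hv h)

end IsAnosov

theorem IsAnosov.det_zpow_sub_one_ne_zero {U : GL (Fin 2) ℤ}
    (hU : IsAnosov (U : Matrix (Fin 2) (Fin 2) ℤ)) {b : ℤ} (hb : b ≠ 0) :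
    (((U ^ b : GL (Fin 2) ℤ) : Matrix (Fin 2) (Fin 2) ℤ) - 1).det ≠ 0 := by
  obtain ⟨n, rfl | rfl⟩ := Int.eq_nat_or_neg b
  · rw [zpow_natCast, Units.val_pow_eq_pow_val]
    exact hU.det_pow_sub_one_ne_zero (by omega)
  · rw [_root_.zpow_neg, zpow_natCast]
    refine det_inv_sub_one_ne_zero _ ?_
    rw [Units.val_pow_eq_pow_val]
    exact hU.det_pow_sub_one_ne_zero (by omega)

theorem Subgroup.index_ne_zero_of_zpow_mem {G : Type*} [CommGroup G] [Group.FG G]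
    (H : Subgroup G) {n : ℤ} (hn : n ≠ 0) (h : ∀ x, x ^ n ∈ H) : H.index ≠ 0 :=
  have : Finite (G ⧸ H) := CommGroup.finite_of_fg_isMulTorsion _ fun q ↦
    QuotientGroup.induction_on q fun x ↦ isOfFinOrder_iff_zpow_eq_one.mpr
      ⟨n, hn, by rw [← QuotientGroup.mk_zpow, QuotientGroup.eq_one_iff]; exact h x⟩
  index_ne_zero_of_finite

theorem Subgroup.index_ne_zero_of_det_ne_zero (H : Subgroup (Multiplicative (Fin 2 → ℤ)))
    {v w : Fin 2 → ℤ} (hv : .ofAdd v ∈ H) (hw : .ofAdd w ∈ H) (hdet : (of ![v, w]).det ≠ 0) :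
    H.index ≠ 0 := by
  refine H.index_ne_zero_of_zpow_mem hdet fun x ↦ ?_
  have cramer : (of ![v, w]).det • x.toAdd =
      (x.toAdd 0 * w 1 - x.toAdd 1 * w 0) • v + (v 0 * x.toAdd 1 - v 1 * x.toAdd 0) • w := by
    ext i; fin_cases i <;> simp [det_fin_two] <;> ring
  rw [← ofAdd_toAdd x, ← ofAdd_zsmul, cramer, ofAdd_add, ofAdd_zsmul, ofAdd_zsmul]
  exact mul_mem (zpow_mem hv _) (zpow_mem hw _)

theorem Subgroup.index_ne_zero_of_relIndex_ker_ne_zero {G G' : Type*} [Group G] [Group G']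
    (f : G →* G') (N : Subgroup G) [N.Normal] (hker : N.relIndex f.ker ≠ 0)
    (hmap : (N.map f).index ≠ 0) : N.index ≠ 0 := by
  rw [← relIndex_mul_index (le_sup_left : N ≤ N ⊔ f.ker), sup_comm, relIndex_sup_right]
  rw [index_map, sup_comm] at hmap
  exact mul_ne_zero hker (left_ne_zero_of_mul hmap)

theorem SemidirectProduct.mul_inl_mul_inv {N G : Type*} [CommGroup N] [Group G]
    {φ : G →* MulAut N} (x : N ⋊[φ] G) (n : N) : x * inl n * x⁻¹ = inl (φ x.right n) := by
  ext <;> simp [mul_comm]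

def thetaHom : GL (Fin 2) ℤ →* MulAut (Multiplicative (Fin 2 → ℤ)) where
  toFun U := AddEquiv.toMultiplicative (thetaAddAut U)
  map_one' := by ext; simp [thetaAddAut]
  map_mul' U V := by
    ext x : 1
    exact congrArg Multiplicative.ofAdd
      (mulVec_mulVec x.toAdd (U : Matrix (Fin 2) (Fin 2) ℤ) V).symm

namespace piTheta

open SemidirectProduct

variable {Θ : GL (Fin 2) ℤ}

theorem action_ofAdd (b : ℤ) (v : Fin 2 → ℤ) :
    zpowersHom _ (AddEquiv.toMultiplicative (thetaAddAut Θ)) (.ofAdd b) (.ofAdd v) =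
      .ofAdd (((Θ ^ b : GL (Fin 2) ℤ) : Matrix (Fin 2) (Fin 2) ℤ) *ᵥ v) := by
  rw [zpowersHom_apply, toAdd_ofAdd]
  exact congrArg (· (.ofAdd v)) (map_zpow thetaHom Θ b).symm

variable {N : Subgroup (piTheta Θ)}

theorem ofAdd_mulVec_mem_comap_inl (hN : N.Normal) {v : Fin 2 → ℤ}
    (hv : .ofAdd v ∈ N.comap inl) : .ofAdd ((Θ : Matrix (Fin 2) (Fin 2) ℤ) *ᵥ v) ∈ N.comap inl := by
  have hconj := hN.conj_mem _ hv (inr (.ofAdd 1))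
  rwa [mul_inl_mul_inv, right_inr, action_ofAdd, zpow_one] at hconj

theorem ofAdd_zpow_sub_one_mulVec_mem_comap_inl (hN : N.Normal) {g : piTheta Θ} (hg : g ∈ N)
    (w : Fin 2 → ℤ) :
    .ofAdd ((((Θ ^ g.right.toAdd : GL (Fin 2) ℤ) : Matrix (Fin 2) (Fin 2) ℤ) - 1) *ᵥ w) ∈
      N.comap inl := by
  have hcomm : g * inl (.ofAdd w) * g⁻¹ * (inl (.ofAdd w))⁻¹ ∈ N := by
    simpa only [mul_assoc] using N.mul_mem hg (hN.conj_mem _ (N.inv_mem hg) (inl (.ofAdd w)))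
  rw [mul_inl_mul_inv, ← ofAdd_toAdd g.right, action_ofAdd] at hcomm
  rwa [Subgroup.mem_comap, sub_mulVec, one_mulVec, sub_eq_add_neg, ofAdd_add, ofAdd_neg, map_mul,
    map_inv]

variable (hΘ : IsAnosov (Θ : Matrix (Fin 2) (Fin 2) ℤ)) (hN : N.Normal)
include hΘ hN

theorem index_comap_inl_ne_zero_of_right_ne_one {g : piTheta Θ} (hg : g ∈ N)
    (hright : g.right ≠ 1) : (N.comap inl).index ≠ 0 := by
  set A := ((Θ ^ g.right.toAdd : GL (Fin 2) ℤ) : Matrix (Fin 2) (Fin 2) ℤ) - 1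
  have hcols : of ![A.col 0, A.col 1] = Aᵀ := by ext i j; fin_cases i <;> rfl
  refine (N.comap inl).index_ne_zero_of_det_ne_zero (v := A.col 0) (w := A.col 1) ?_ ?_ ?_
  · rw [← mulVec_single_one]; exact ofAdd_zpow_sub_one_mulVec_mem_comap_inl hN hg _
  · rw [← mulVec_single_one]; exact ofAdd_zpow_sub_one_mulVec_mem_comap_inl hN hg _
  · rw [hcols, det_transpose]
    exact hΘ.det_zpow_sub_one_ne_zero (toAdd_eq_zero.not.mpr hright)

theorem index_comap_inl_ne_zero_of_ne_one {a : Multiplicative (Fin 2 → ℤ)} (ha : inl a ∈ N)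
    (ha1 : a ≠ 1) : (N.comap inl).index ≠ 0 :=
  (N.comap inl).index_ne_zero_of_det_ne_zero (v := a.toAdd) ha (ofAdd_mulVec_mem_comap_inl hN ha)
    (hΘ.det_of_mulVec_ne_zero (toAdd_eq_zero.not.mpr ha1))

theorem le_zSqSubgroup_of_index_eq_zero (hinf : N.index = 0) : N ≤ zSqSubgroup Θ := by
  intro g hg
  by_contra hgA
  have hright : g.right ≠ 1 := fun h ↦ hgA (by rwa [zSqSubgroup, range_inl_eq_ker_rightHom])
  refine N.index_ne_zero_of_relIndex_ker_ne_zero rightHom ?_ ?_ hinf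
  · rw [← range_inl_eq_ker_rightHom, ← Subgroup.index_comap]
    exact index_comap_inl_ne_zero_of_right_ne_one hΘ hN hg hright
  · refine (N.map rightHom).index_ne_zero_of_zpow_mem (toAdd_eq_zero.not.mpr hright) fun x ↦ ?_
    have hswap : x ^ g.right.toAdd = g.right ^ x.toAdd := by
      apply Multiplicative.toAdd.injective
      simp [mul_comm]
    rw [hswap]
    exact zpow_mem (N.mem_map_of_mem rightHom hg) _

end piTheta

/-- if `Θ ∈ GL(2,ℤ)` is hyperbolic (no eigenvalue a root of unity;
equivalently `det Θ = 1` and `|tr Θ| > 2`, or `det Θ = −1` and `tr Θ ≠ 0`) and `N`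
is a nontrivial normal subgroup of infinite index in `π_Θ = ℤ² ⋊_Θ ℤ`, then
`N ≤ A = ℤ² × {0}`, `N` has finite index in `A`, and `N` is abelian. -/
theorem stmt13 (Θ : GL (Fin 2) ℤ)
    (hhyp : ((Θ : Matrix (Fin 2) (Fin 2) ℤ).det = 1 ∧
        2 < |(Θ : Matrix (Fin 2) (Fin 2) ℤ).trace|) ∨
      ((Θ : Matrix (Fin 2) (Fin 2) ℤ).det = -1 ∧
        (Θ : Matrix (Fin 2) (Fin 2) ℤ).trace ≠ 0))
    (N : Subgroup (piTheta Θ)) (hN : N.Normal) (hnt : N ≠ ⊥) (hinf : N.index = 0) :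
    N ≤ zSqSubgroup Θ ∧ (N.subgroupOf (zSqSubgroup Θ)).index ≠ 0 ∧
      ∀ x ∈ N, ∀ y ∈ N, x * y = y * x := by
  have hΘ : IsAnosov (Θ : Matrix (Fin 2) (Fin 2) ℤ) := hhyp
  have hNA := piTheta.le_zSqSubgroup_of_index_eq_zero hΘ hN hinf
  refine ⟨hNA, ?_, ?_⟩
  · obtain ⟨_, hx, hx1⟩ := N.bot_or_exists_ne_one.resolve_left hnt
    obtain ⟨a, rfl⟩ := hNA hx
    rw [← Subgroup.relIndex, zSqSubgroup, ← Subgroup.index_comap]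
    exact piTheta.index_comap_inl_ne_zero_of_ne_one hΘ hN hx (by rintro rfl; exact hx1 (map_one _))
  · rintro _ hx _ hy
    obtain ⟨a, rfl⟩ := hNA hx
    obtain ⟨b, rfl⟩ := hNA hy
    rw [← map_mul, ← map_mul, mul_comm]
end

section
/- Let Θ ∈ GL(2,ℤ) be hyperbolic, i.e. det Θ = ±1 and no eigenvalue of Θ is a root of unity (equivalently: if det Θ = 1 then |tr Θ| > 2, and if det Θ = −1 then tr Θ ≠ 0), and let π_Θ = ℤ² ⋊_Θ ℤ. Then: (a) every subgroup of finite index in π_Θ can be generated by three elements; (b) every proper subgroup of infinite index in π_Θ can be generated by two elements. -/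
/-!
Let `N ≅ ℤ²` be the kernel of the projection `π_Θ → ℤ`. For a subgroup `H`, the intersection
`H ∩ N` is a subgroup of `ℤ²`, hence generated by at most two elements, and the image of `H`
in `ℤ` is cyclic, generated by the image of some `h ∈ H`; so `H` is generated by `h` and the
generators of `H ∩ N`. If `H` has infinite index and is not contained in `N`, then its image
in `ℤ` has finite index, so `H ∩ N` must have infinite index in `N`, i.e. rank at most one.
-/

open Subgroup

namespace Subgroup

variable {G Q : Type*} [Group G] [Group Q]

/-- The embedding `N ⧸ (H ⊓ N) ↪ (H ⊔ N) ⧸ H` is onto because `H ⊔ N = N * H`. -/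
theorem relIndex_sup_of_normal_right (H N : Subgroup G) [N.Normal] :
    H.relIndex (H ⊔ N) = H.relIndex N := by
  refine (Nat.card_congr (Equiv.ofBijective _
    ⟨(quotientSubgroupOfEmbeddingOfLE H (le_sup_right : N ≤ H ⊔ N)).injective, ?_⟩)).symm
  intro q
  induction q using QuotientGroup.induction_on with | H z => ?_
  have hz : (z : G) ∈ ((N ⊔ H : Subgroup G) : Set G) := sup_comm H N ▸ z.2
  rw [normal_mul] at hz
  obtain ⟨n, hn, k, hk, hnk⟩ := hz
  refine ⟨QuotientGroup.mk ⟨n, hn⟩, ?_⟩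
  rw [quotientSubgroupOfEmbeddingOfLE_apply_mk, QuotientGroup.eq, mem_subgroupOf]
  simpa [← hnk] using hk

theorem index_ne_zero_of_map_of_relIndex_ker {H : Subgroup G} {f : G →* Q}
    (hf : Function.Surjective f) (hmap : (H.map f).index ≠ 0) (hker : H.relIndex f.ker ≠ 0) :
    H.index ≠ 0 := by
  rw [index_map, f.range_eq_top_of_surjective hf, index_top, mul_one] at hmap
  rw [← relIndex_mul_index (le_sup_left : H ≤ H ⊔ f.ker), relIndex_sup_of_normal_right]
  exact mul_ne_zero hker hmap

theorem index_toAddSubgroup' {A : Type*} [AddGroup A] (P : Subgroup (Multiplicative A)) :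
    P.toAddSubgroup'.index = P.index := by
  rw [← AddSubgroup.index_toSubgroup]
  rfl

theorem _root_.Int.subgroup_index_ne_zero_of_ne_bot {K : Subgroup (Multiplicative ℤ)} (hK : K ≠ ⊥) :
    K.index ≠ 0 := by
  rw [← index_toAddSubgroup']
  obtain ⟨a, ha⟩ := Int.subgroup_cyclic K.toAddSubgroup'
  have ha0 : a ≠ 0 := by
    rintro rfl
    refine hK (toAddSubgroup'.injective ?_)
    rw [ha, AddSubgroup.closure_singleton_zero, OrderIso.map_bot]
  rw [ha, ← AddSubgroup.zmultiples_eq_closure, Int.index_zmultiples]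
  exact Int.natAbs_ne_zero.mpr ha0

theorem index_ne_zero_of_not_le_ker {H : Subgroup G} {f : G →* Multiplicative ℤ}
    (hf : Function.Surjective f) (hH : ¬H ≤ f.ker) (hker : H.relIndex f.ker ≠ 0) :
    H.index ≠ 0 :=
  index_ne_zero_of_map_of_relIndex_ker hf
    (Int.subgroup_index_ne_zero_of_ne_bot (by rwa [Ne, map_eq_bot_iff])) hker

theorem exists_mem_map_eq_zpowers [IsCyclic Q] (f : G →* Q) (H : Subgroup G) :
    ∃ h ∈ H, H.map f = zpowers (f h) := by
  obtain ⟨g, hg⟩ := (H.map f).isCyclic_iff_exists_zpowers_eq_top.mp inferInstance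
  obtain ⟨h, hh, rfl⟩ := hg ▸ mem_zpowers g
  exact ⟨h, hh, hg.symm⟩

theorem closure_insert_eq_of_map_eq_zpowers {f : G →* Q} {H : Subgroup G} {h : G} (hh : h ∈ H)
    (hmap : H.map f = zpowers (f h)) {T : Set G} (hT : closure T = H ⊓ f.ker) :
    closure (insert h T) = H := by
  refine le_antisymm ((closure_le _).mpr (Set.insert_subset hh ?_)) fun x hx ↦ ?_
  · exact hT ▸ subset_closure |>.trans (by simp)
  obtain ⟨n, hn⟩ := mem_zpowers_iff.mp (hmap ▸ mem_map_of_mem f hx)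
  have hker : x * (h ^ n)⁻¹ ∈ closure (insert h T) := by
    refine closure_mono (Set.subset_insert h T)
      (hT ▸ mem_inf.mpr ⟨mul_mem hx (inv_mem (zpow_mem hh n)), ?_⟩)
    simp [hn]
  simpa using mul_mem hker (zpow_mem (subset_closure (Set.mem_insert h T)) n)

theorem exists_finset_card_le_succ_closure_eq [IsCyclic Q] [DecidableEq G] (f : G →* Q)
    {H : Subgroup G} {T : Finset G} (hT : closure (T : Set G) = H ⊓ f.ker) :
    ∃ S : Finset G, S.card ≤ T.card + 1 ∧ closure (S : Set G) = H := by
  obtain ⟨h, hh, hmap⟩ := exists_mem_map_eq_zpowers f H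
  exact ⟨insert h T, Finset.card_insert_le h T,
    by simpa using closure_insert_eq_of_map_eq_zpowers hh hmap hT⟩

end Subgroup

namespace Module.Basis

variable {ι M : Type*} [Fintype ι] [AddCommGroup M]

/-- Generators come from a Smith normal form basis of `A`, whose length is `Fintype.card ι`
exactly when `A` has finite index. -/
theorem exists_finset_card_le_addSubgroup_closure_eq (b : Basis ι ℤ M) (A : AddSubgroup M) :
    ∃ T : Finset M, T.card ≤ Fintype.card ι ∧ (A.index = 0 → T.card < Fintype.card ι) ∧
      AddSubgroup.closure (T : Set M) = A := by
  classical
  obtain ⟨n, snf⟩ := (AddSubgroup.toIntSubmodule A).smithNormalForm b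
  have hcard : (Finset.univ.image fun i ↦ (snf.bN i : M)).card ≤ n :=
    Finset.card_image_le.trans (by simp)
  have hn : n ≤ Fintype.card ι := by simpa using Fintype.card_le_of_embedding snf.f
  refine ⟨_, hcard.trans hn, fun h0 ↦ hcard.trans_lt (hn.lt_of_ne ?_), ?_⟩
  · exact fun h ↦ snf.toAddSubgroup_index_ne_zero_iff.mpr h h0
  · rw [Finset.coe_image, Finset.coe_univ, Set.image_univ,
      ← Submodule.span_int_eq_addSubgroupClosure, Set.range_comp', ← Submodule.coe_subtype,
      Submodule.span_image, snf.bN.span_eq, Submodule.map_top, Submodule.range_subtype]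
    rfl

theorem exists_finset_card_le_closure_eq (b : Basis ι ℤ M) (P : Subgroup (Multiplicative M)) :
    ∃ T : Finset (Multiplicative M), T.card ≤ Fintype.card ι ∧
      (P.index = 0 → T.card < Fintype.card ι) ∧ closure (T : Set (Multiplicative M)) = P := by
  obtain ⟨T, hcard, hindex, hclosure⟩ :=
    b.exists_finset_card_le_addSubgroup_closure_eq P.toAddSubgroup'
  rw [index_toAddSubgroup'] at hindex
  refine ⟨T.map Multiplicative.ofAdd.toEmbedding, by simpa using hcard, by simpa using hindex,
    ?_⟩
  apply toAddSubgroup'.injective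
  rw [toAddSubgroup'_closure, Finset.coe_map]
  simpa using hclosure

end Module.Basis

theorem SemidirectProduct.closure_image_inl_eq_inf_ker {N G : Type*} [Group N] [Group G]
    {φ : G →* MulAut N} {H : Subgroup (N ⋊[φ] G)} {T : Set N} (hT : closure T = H.comap inl) :
    closure (inl '' T) = H ⊓ rightHom.ker := by
  rw [← MonoidHom.map_closure, hT, map_comap_eq, range_inl_eq_ker_rightHom, inf_comm]

open SemidirectProduct in
theorem stmt14_general (Θ : GL (Fin 2) ℤ) :
    (∀ H : Subgroup (piTheta Θ), H.index ≠ 0 →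
      ∃ S : Finset (piTheta Θ), S.card ≤ 3 ∧ Subgroup.closure (S : Set (piTheta Θ)) = H) ∧
    (∀ H : Subgroup (piTheta Θ), H ≠ ⊤ → H.index = 0 →
      ∃ S : Finset (piTheta Θ), S.card ≤ 2 ∧ Subgroup.closure (S : Set (piTheta Θ)) = H) := by
  classical
  have hgen_ker : ∀ H : Subgroup (piTheta Θ), ∃ T : Finset (piTheta Θ), T.card ≤ 2 ∧
      ((H.comap inl).index = 0 → T.card ≤ 1) ∧
      closure (T : Set (piTheta Θ)) = H ⊓ rightHom.ker := by
    intro H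
    obtain ⟨T, hcard, hindex, hT⟩ :=
      (Pi.basisFun ℤ (Fin 2)).exists_finset_card_le_closure_eq (H.comap inl)
    refine ⟨T.image inl, Finset.card_image_le.trans (by simpa using hcard),
      fun h0 ↦ Finset.card_image_le.trans (by simpa using hindex h0), ?_⟩
    rw [Finset.coe_image]
    exact closure_image_inl_eq_inf_ker hT
  refine ⟨fun H _ ↦ ?_, fun H _ hH ↦ ?_⟩
  · obtain ⟨T, hcard, -, hT⟩ := hgen_ker H
    obtain ⟨S, hS, hSH⟩ := exists_finset_card_le_succ_closure_eq rightHom hT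
    exact ⟨S, by omega, hSH⟩
  · obtain ⟨T, hcard, hrank, hT⟩ := hgen_ker H
    by_cases hker : H ≤ rightHom.ker
    · exact ⟨T, hcard, by rwa [inf_of_le_left hker] at hT⟩
    have hT1 : T.card ≤ 1 := hrank <| by
      rw [index_comap, range_inl_eq_ker_rightHom]
      by_contra h
      exact index_ne_zero_of_not_le_ker rightHom_surjective hker h hH
    obtain ⟨S, hS, hSH⟩ := exists_finset_card_le_succ_closure_eq rightHom hT
    exact ⟨S, by omega, hSH⟩

/-- if `Θ ∈ GL(2,ℤ)` is hyperbolic (no eigenvalue a root of unity;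
equivalently `det Θ = 1` and `|tr Θ| > 2`, or `det Θ = −1` and `tr Θ ≠ 0`), then
(a) every finite-index subgroup of `π_Θ = ℤ² ⋊_Θ ℤ` is generated by (at most)
three elements, and (b) every proper subgroup of infinite index is generated by
(at most) two elements. -/
theorem stmt14 (Θ : GL (Fin 2) ℤ)
    (hhyp : ((Θ : Matrix (Fin 2) (Fin 2) ℤ).det = 1 ∧
        2 < |(Θ : Matrix (Fin 2) (Fin 2) ℤ).trace|) ∨
      ((Θ : Matrix (Fin 2) (Fin 2) ℤ).det = -1 ∧
        (Θ : Matrix (Fin 2) (Fin 2) ℤ).trace ≠ 0)) :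
    (∀ H : Subgroup (piTheta Θ), H.index ≠ 0 →
      ∃ S : Finset (piTheta Θ), S.card ≤ 3 ∧ Subgroup.closure (S : Set (piTheta Θ)) = H) ∧
    (∀ H : Subgroup (piTheta Θ), H ≠ ⊤ → H.index = 0 →
      ∃ S : Finset (piTheta Θ), S.card ≤ 2 ∧ Subgroup.closure (S : Set (piTheta Θ)) = H) :=
  stmt14_general Θ
end
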